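/- Let b ∈ (0, 3/4). There is a constant C > 0 such that for all ε ∈ (0,1) and t ≥ 0, ∫₀ᵗ (1+t-s)^{-3/4}(1+s/ε)^{-b}(1+s)^{-1/4} ds ≤ C ε^b (1+t)^{-b} + C(1+t/ε)^{-b}. -/

import Mathlib

/-!
Split the integral at `s = t / 2`. On `[0, t/2]` we have `1 + t - s ≥ (1 + t) / 2` and
`(1 + s/ε)^(-b) ≤ ε^b s^(-b)`, and integrating `s^(-b-1/4)` up to `t/2` gives
`ε^b (1 + t)^(-b)`. On `[t/2, t]` the last two factors are at most their values at `t/2`,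
comparable to `(1 + t/ε)^(-b) (1 + t)^(-1/4)`, while `∫ (1 + t - s)^(-3/4)` over that half is
`O((1 + t)^(1/4))`.
-/

open Set intervalIntegral

theorem one_add_div_rpow_neg_le {s ε b : ℝ} (hs : 0 < s) (hε : 0 < ε) (hb : 0 ≤ b) :
    (1 + s / ε) ^ (-b) ≤ ε ^ b * s ^ (-b) :=
  calc (1 + s / ε) ^ (-b) ≤ (s / ε) ^ (-b) :=
        Real.rpow_le_rpow_of_nonpos (by positivity) (by linarith) (neg_nonpos.mpr hb)
    _ = ε ^ b * s ^ (-b) := by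
        rw [Real.div_rpow hs.le hε.le, Real.rpow_neg hε.le, div_inv_eq_mul, mul_comm]

theorem one_add_half_rpow_neg_le {x p : ℝ} (hx : 0 ≤ x) (hp : 0 ≤ p) :
    (1 + x / 2) ^ (-p) ≤ 2 ^ p * (1 + x) ^ (-p) :=
  calc (1 + x / 2) ^ (-p) ≤ ((1 + x) / 2) ^ (-p) :=
        Real.rpow_le_rpow_of_nonpos (by positivity) (by linarith) (neg_nonpos.mpr hp)
    _ = 2 ^ p * (1 + x) ^ (-p) := by
        rw [Real.div_rpow (by positivity) zero_le_two, Real.rpow_neg zero_le_two,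
          div_inv_eq_mul, mul_comm]

section ConvolutionIntegrand

variable {α b β ε t : ℝ}

theorem intervalIntegrable_convolution_integrand (hε : 0 < ε) {a c : ℝ} (ha : 0 ≤ a)
    (hac : a ≤ c) (hct : c ≤ t) :
    IntervalIntegrable (fun s => (1 + t - s) ^ (-α) * (1 + s / ε) ^ (-b) * (1 + s) ^ (-β))
      MeasureTheory.volume a c := by
  have hpos : ∀ s ∈ Icc a c, 0 < 1 + t - s ∧ 0 < 1 + s / ε ∧ 0 < 1 + s :=
    fun s ⟨has, hsc⟩ => ⟨by linarith,
      by have := div_nonneg (ha.trans has) hε.le; linarith, by linarith⟩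
  refine ContinuousOn.intervalIntegrable_of_Icc hac ?_
  exact (((continuousOn_const.sub continuousOn_id).rpow_const
      fun s hs => Or.inl (hpos s hs).1.ne').mul
    (((continuousOn_id.div_const ε).const_add 1).rpow_const
      fun s hs => Or.inl (hpos s hs).2.1.ne')).mul
    ((continuousOn_id.const_add 1).rpow_const fun s hs => Or.inl (hpos s hs).2.2.ne')

theorem integral_convolution_integrand_first_half_le (hα : 0 ≤ α) (hb : 0 ≤ b)
    (hβ : 0 ≤ β) (hbβ : b + β < 1) (hε : 0 < ε) (ht : 0 ≤ t) :
    ∫ s in (0 : ℝ)..t / 2, (1 + t - s) ^ (-α) * (1 + s / ε) ^ (-b) * (1 + s) ^ (-β)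
      ≤ 2 ^ α / (1 - b - β) * ε ^ b * (1 + t) ^ (1 - α - b - β) := by
  have hγ : 0 < 1 - b - β := by linarith
  have hT : 0 ≤ t / 2 := by positivity
  calc _ ≤ ∫ s in (0 : ℝ)..t / 2, (1 + t / 2) ^ (-α) * ε ^ b * s ^ (-(b + β)) := by
        refine integral_mono_on_of_le_Ioo hT
          (intervalIntegrable_convolution_integrand hε le_rfl hT (by linarith))
          ((intervalIntegrable_rpow' (by linarith)).const_mul _) fun s ⟨hs0, hsT⟩ => ?_
        calc _ ≤ (1 + t / 2) ^ (-α) * (ε ^ b * s ^ (-b)) * s ^ (-β) := by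
              gcongr ?_ * ?_ * ?_
              · exact Real.rpow_le_rpow_of_nonpos (by positivity) (by linarith)
                  (neg_nonpos.mpr hα)
              · exact one_add_div_rpow_neg_le hs0 hε hb
              · exact Real.rpow_le_rpow_of_nonpos hs0 (by linarith) (neg_nonpos.mpr hβ)
          _ = _ := by rw [neg_add, Real.rpow_add hs0]; ring
    _ = (1 + t / 2) ^ (-α) * ε ^ b * ((t / 2) ^ (1 - b - β) / (1 - b - β)) := by
        rw [integral_const_mul, integral_rpow (Or.inl (by linarith)),
          show -(b + β) + 1 = 1 - b - β by ring, Real.zero_rpow hγ.ne']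
        ring
    _ ≤ 2 ^ α * (1 + t) ^ (-α) * ε ^ b * ((1 + t) ^ (1 - b - β) / (1 - b - β)) := by
        gcongr
        · exact one_add_half_rpow_neg_le ht hα
        · linarith
    _ = _ := by
        rw [show 1 - α - b - β = -α + (1 - b - β) by ring, Real.rpow_add (by linarith)]
        ring

theorem integral_convolution_integrand_second_half_le (hα : α < 1) (hb : 0 ≤ b) (hβ : 0 ≤ β)
    (hε : 0 < ε) (ht : 0 ≤ t) :
    ∫ s in t / 2..t, (1 + t - s) ^ (-α) * (1 + s / ε) ^ (-b) * (1 + s) ^ (-β)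
      ≤ 2 ^ (b + β) / (1 - α) * (1 + t / ε) ^ (-b) * (1 + t) ^ (1 - α - β) := by
  have hT : 0 ≤ t / 2 := by positivity
  have hTt : t / 2 ≤ t := by linarith
  calc _ ≤ ∫ s in t / 2..t,
        (1 + t / ε / 2) ^ (-b) * (1 + t / 2) ^ (-β) * (1 + t - s) ^ (-α) := by
        refine integral_mono_on hTt (intervalIntegrable_convolution_integrand hε hT hTt le_rfl)
          (ContinuousOn.intervalIntegrable_of_Icc hTt ?_) fun s ⟨hTs, hst⟩ => ?_
        · exact continuousOn_const.mul ((continuousOn_const.sub continuousOn_id).rpow_const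
            fun s ⟨_, hst⟩ => Or.inl (by linarith : 0 < 1 + t - s).ne')
        have hsε : t / ε / 2 ≤ s / ε := by rw [div_right_comm]; gcongr
        have hε_factor : (1 + s / ε) ^ (-b) ≤ (1 + t / ε / 2) ^ (-b) :=
          Real.rpow_le_rpow_of_nonpos (by positivity) (by linarith) (neg_nonpos.mpr hb)
        have hs_factor : (1 + s) ^ (-β) ≤ (1 + t / 2) ^ (-β) :=
          Real.rpow_le_rpow_of_nonpos (by positivity) (by linarith) (neg_nonpos.mpr hβ)
        have h_kernel : 0 ≤ (1 + t - s) ^ (-α) := Real.rpow_nonneg (by linarith) _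
        calc _ ≤ (1 + t - s) ^ (-α) * (1 + t / ε / 2) ^ (-b) * (1 + t / 2) ^ (-β) :=
              mul_le_mul (mul_le_mul_of_nonneg_left hε_factor h_kernel) hs_factor
                (Real.rpow_nonneg (by linarith) _) (mul_nonneg h_kernel (by positivity))
          _ = _ := by ring
    _ = (1 + t / ε / 2) ^ (-b) * (1 + t / 2) ^ (-β) *
          (((1 + t / 2) ^ (1 - α) - 1) / (1 - α)) := by
        rw [integral_const_mul, integral_comp_sub_left (fun u => u ^ (-α)),
          integral_rpow (Or.inl (by linarith)), show -α + 1 = 1 - α by ring,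
          show 1 + t - t = 1 by ring, show 1 + t - t / 2 = 1 + t / 2 by ring, Real.one_rpow]
    _ ≤ 2 ^ b * (1 + t / ε) ^ (-b) * (2 ^ β * (1 + t) ^ (-β)) *
          ((1 + t) ^ (1 - α) / (1 - α)) := by
        have hε_factor := one_add_half_rpow_neg_le (div_nonneg ht hε.le) hb
        have hs_factor := one_add_half_rpow_neg_le ht hβ
        have hα' : 0 < 1 - α := by linarith
        have h_pow_mono : (1 + t / 2) ^ (1 - α) ≤ (1 + t) ^ (1 - α) :=
          Real.rpow_le_rpow (by positivity) (by linarith) hα'.le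
        have h_one_le_pow : 1 ≤ (1 + t / 2) ^ (1 - α) := Real.one_le_rpow (by linarith) hα'.le
        gcongr
        linarith
    _ = _ := by
        rw [show 1 - α - β = -β + (1 - α) by ring, Real.rpow_add two_pos,
          Real.rpow_add (by linarith : 0 < 1 + t)]
        ring

end ConvolutionIntegrand

/-- Convolution estimate with fractional initial-layer exponent b ∈ (0, 3/4):
    ∫₀ᵗ (1+t-s)^{-3/4}(1+s/ε)^{-b}(1+s)^{-1/4} ds ≤ Cε^b(1+t)^{-b} + C(1+t/ε)^{-b}. -/
theorem convolution_initial_layer_frac (b : ℝ) (hb : b ∈ Set.Ioo (0 : ℝ) (3 / 4)) :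
    ∃ C > 0, ∀ ε : ℝ, ε ∈ Set.Ioo (0 : ℝ) 1 → ∀ t : ℝ, 0 ≤ t →
      (∫ s in (0 : ℝ)..t,
          (1 + t - s) ^ (-(3 : ℝ) / 4) * (1 + s / ε) ^ (-b) * (1 + s) ^ (-(1 : ℝ) / 4)) ≤
        C * ε ^ b * (1 + t) ^ (-b) + C * (1 + t / ε) ^ (-b) := by
  obtain ⟨hb0, hb34⟩ := hb
  set C₁ : ℝ := 2 ^ (3 / 4 : ℝ) / (1 - b - 1 / 4)
  set C₂ : ℝ := 2 ^ (b + 1 / 4) / (1 - 3 / 4)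
  have hC₁ : 0 < C₁ := div_pos (by positivity) (by linarith)
  refine ⟨max C₁ C₂, lt_max_of_lt_left hC₁, fun ε ⟨hε, _⟩ t ht => ?_⟩
  have h₁ := integral_convolution_integrand_first_half_le (α := 3 / 4) (β := 1 / 4)
    (by norm_num) hb0.le (by norm_num) (by linarith) hε ht
  have h₂ := integral_convolution_integrand_second_half_le (α := 3 / 4) (β := 1 / 4)
    (by norm_num) hb0.le (by norm_num) hε ht
  rw [show 1 - 3 / 4 - b - 1 / 4 = -b by ring] at h₁
  rw [show (1 : ℝ) - 3 / 4 - 1 / 4 = 0 by norm_num, Real.rpow_zero, mul_one] at h₂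
  simp only [neg_div]
  rw [← integral_add_adjacent_intervals
    (intervalIntegrable_convolution_integrand (c := t / 2) hε le_rfl (by positivity)
      (by linarith))
    (intervalIntegrable_convolution_integrand (a := t / 2) hε (by positivity) (by linarith)
      le_rfl)]
  calc _ ≤ C₁ * ε ^ b * (1 + t) ^ (-b) + C₂ * (1 + t / ε) ^ (-b) := add_le_add h₁ h₂
    _ ≤ _ := by gcongr <;> simp
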